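/- Let A, B ∈ ℝ^{n×n} be positive semidefinite with rank(A) ≥ rank(B), and let Γ : [0,1] → ℝ^{n×n} be a map with Γ_t positive semidefinite for all t, Γ₀ = A and Γ₁ = B. Then W₂²(Γ_s, Γ_t) = (t−s)²·W₂²(A, B) for all 0 ≤ s ≤ t ≤ 1 (i.e., Γ is a constant-speed geodesic from A to B) if and only if there exist matrices G and M with G·Gᵀ = A, M·Mᵀ = B, Gᵀ·M positive semidefinite, and Γ_t = ((1−t)·G + t·M)·((1−t)·G + t·M)ᵀ for all t ∈ [0,1]. -/

import Mathlib

open Matrix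

/-- The positive semidefinite square root of a psd matrix (junk value `0` otherwise). -/
noncomputable def psdSqrt {n : ℕ} (M : Matrix (Fin n) (Fin n) ℝ) : Matrix (Fin n) (Fin n) ℝ :=
  letI := Classical.propDecidable M.PosSemidef
  if h : M.PosSemidef then
    (h.1.eigenvectorUnitary : Matrix (Fin n) (Fin n) ℝ) *
      diagonal ((↑) ∘ Real.sqrt ∘ h.1.eigenvalues) *
      (star h.1.eigenvectorUnitary : Matrix (Fin n) (Fin n) ℝ) else 0

/-- `trace √(√A·B·√A)`. -/
noncomputable def sqrtTr {n : ℕ} (A B : Matrix (Fin n) (Fin n) ℝ) : ℝ :=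
  (psdSqrt (psdSqrt A * B * psdSqrt A)).trace

/-- `T` is an optimal transport matrix from `A` to `B`. -/
def IsOT {n : ℕ} (A B T : Matrix (Fin n) (Fin n) ℝ) : Prop :=
  T * A * Tᵀ = B ∧ (A * T).trace = sqrtTr A B

/-- Squared Bures–Wasserstein distance. -/
noncomputable def W2sq {n : ℕ} (A B : Matrix (Fin n) (Fin n) ℝ) : ℝ :=
  A.trace + B.trace - 2 * sqrtTr A B

/-!
Factor `A = G Gᵀ`. For every factorization `B = M Mᵀ`, `W₂²(A, B) ≤ ‖G - M‖²` in the Frobenius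
norm, with equality iff `Gᵀ M ⪰ 0`: this is `tr C ≤ tr √(C Cᵀ)` for `C = Gᵀ M`, with equality iff
`C ⪰ 0`, a consequence of the polar decomposition `C = √(C Cᵀ) U`. Such optimal factors always
exist.

If `Γ` is a constant-speed geodesic, lifting `Γ s`, `Γ t` and `B` successively to optimal factors,
starting from `G = √A`, gives a broken line of length `W₂(A, B)` from `G` to a factor `M` of `B`
with `‖G - M‖ ≥ W₂(A, B)`. By strict convexity of the Frobenius norm it is a segment, so `Γ s` and
`Γ t` are Gram matrices of points of `[G, M]`. The curve `t ↦ ((1-t)G + tM)((1-t)G + tM)ᵀ` depends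
on `M` only through the cross term `G Mᵀ + M Gᵀ`, which is read off at `t = 1/2`, so a single `M`
serves every `t`. Conversely, if `Gᵀ M ⪰ 0` then `(1-s)G + sM` and `(1-t)G + tM` are again
optimally aligned, so the distance between their Gram matrices is `|t - s| ‖G - M‖`.
-/

open scoped MatrixOrder
open Filter Topology

namespace Matrix

section Frobenius

variable {m n : Type*}

def frobeniusVec (X : Matrix m n ℝ) : EuclideanSpace ℝ (n × m) := WithLp.toLp 2 X.vec

lemma frobeniusVec_injective : Function.Injective (frobeniusVec : Matrix m n ℝ → _) :=
  fun _ _ h => vec_inj.mp (WithLp.toLp_injective 2 h)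

variable [Fintype m] [Fintype n]

lemma frobeniusVec_lineMap (X Y : Matrix m n ℝ) (t : ℝ) :
    frobeniusVec ((1 - t) • X + t • Y) = AffineMap.lineMap (frobeniusVec X) (frobeniusVec Y) t := by
  rw [AffineMap.lineMap_apply_module]
  rfl

lemma inner_frobeniusVec (X Y : Matrix m n ℝ) :
    inner ℝ (frobeniusVec X) (frobeniusVec Y) = (Xᵀ * Y).trace := by
  rw [frobeniusVec, frobeniusVec, EuclideanSpace.inner_toLp_toLp, star_trivial, dotProduct_comm,
    vec_dotProduct_vec]

lemma dist_frobeniusVec_sq (X Y : Matrix m n ℝ) :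
    dist (frobeniusVec X) (frobeniusVec Y) ^ 2
      = (X * Xᵀ).trace + (Y * Yᵀ).trace - 2 * (Xᵀ * Y).trace := by
  rw [dist_eq_norm, norm_sub_sq_real, ← real_inner_self_eq_norm_sq, ← real_inner_self_eq_norm_sq,
    inner_frobeniusVec, inner_frobeniusVec, inner_frobeniusVec, trace_mul_comm Xᵀ,
    trace_mul_comm Yᵀ]
  ring

end Frobenius

section PosSemidef

variable {m n : Type*}

lemma PosSemidef.transpose_eq {P : Matrix m m ℝ} (hP : P.PosSemidef) : Pᵀ = P := by
  simpa [conjTranspose_eq_transpose_of_trivial] using hP.isHermitian.eq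

variable [Fintype m] [Fintype n]

lemma posSemidef_mul_transpose_self (X : Matrix m n ℝ) : (X * Xᵀ).PosSemidef := by
  simpa [conjTranspose_eq_transpose_of_trivial] using posSemidef_self_mul_conjTranspose X

lemma posSemidef_transpose_mul_self (X : Matrix m n ℝ) : (Xᵀ * X).PosSemidef := by
  simpa [conjTranspose_eq_transpose_of_trivial] using posSemidef_conjTranspose_mul_self X

lemma PosSemidef.transpose_mul_mul_same {P : Matrix m m ℝ} (hP : P.PosSemidef)
    (X : Matrix m n ℝ) : (Xᵀ * P * X).PosSemidef := by
  simpa [conjTranspose_eq_transpose_of_trivial] using hP.conjTranspose_mul_mul_same X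

open scoped ComplexOrder in
lemma isClosed_setOf_posSemidef {𝕜 : Type*} [RCLike 𝕜] :
    IsClosed {P : Matrix m m 𝕜 | P.PosSemidef} := by
  have : {P : Matrix m m 𝕜 | P.PosSemidef}
      = {P | Pᴴ = P} ∩ ⋂ x : m → 𝕜, {P | 0 ≤ star x ⬝ᵥ (P *ᵥ x)} := by
    ext P
    simp [posSemidef_iff_dotProduct_mulVec, IsHermitian]
  rw [this]
  exact (isClosed_eq (by fun_prop) continuous_id).inter
    (isClosed_iInter fun x => isClosed_le continuous_const (by fun_prop))

lemma posSemidef_transpose_mul_smul_add_smul {G M : Matrix m n ℝ} (hGM : (Gᵀ * M).PosSemidef)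
    {a b c d : ℝ} (ha : 0 ≤ a) (hb : 0 ≤ b) (hc : 0 ≤ c) (hd : 0 ≤ d) :
    ((a • G + b • M)ᵀ * (c • G + d • M)).PosSemidef := by
  have hMG : (Mᵀ * G).PosSemidef := by simpa using hGM.transpose
  have : (a • G + b • M)ᵀ * (c • G + d • M)
      = (a * c) • (Gᵀ * G) + (a * d) • (Gᵀ * M) + (b * c) • (Mᵀ * G) + (b * d) • (Mᵀ * M) := by
    simp only [transpose_add, transpose_smul, Matrix.add_mul, Matrix.mul_add, Matrix.smul_mul,
      Matrix.mul_smul]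
    module
  rw [this]
  refine ((PosSemidef.add ?_ ?_).add ?_).add ?_
  · exact (posSemidef_transpose_mul_self G).smul (mul_nonneg ha hc)
  · exact hGM.smul (mul_nonneg ha hd)
  · exact hMG.smul (mul_nonneg hb hc)
  · exact (posSemidef_transpose_mul_self M).smul (mul_nonneg hb hd)

end PosSemidef

section Sqrt

variable {m : Type*} [Fintype m] [DecidableEq m]

lemma posSemidef_sqrt (P : Matrix m m ℝ) : (CFC.sqrt P).PosSemidef :=
  nonneg_iff_posSemidef.mp (CFC.sqrt_nonneg P)

lemma sqrt_mul_transpose_sqrt {P : Matrix m m ℝ} (hP : P.PosSemidef) :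
    CFC.sqrt P * (CFC.sqrt P)ᵀ = P := by
  rw [(posSemidef_sqrt P).transpose_eq, CFC.sqrt_mul_sqrt_self P hP.nonneg]

lemma sqrt_transpose_mul_mul {U X : Matrix m m ℝ} (hU : U ∈ orthogonalGroup m ℝ)
    (hX : X.PosSemidef) : CFC.sqrt (Uᵀ * X * U) = Uᵀ * CFC.sqrt X * U := by
  refine CFC.sqrt_unique ?_ ((posSemidef_sqrt X).transpose_mul_mul_same U).nonneg
  calc Uᵀ * CFC.sqrt X * U * (Uᵀ * CFC.sqrt X * U)
      = Uᵀ * CFC.sqrt X * (U * Uᵀ) * CFC.sqrt X * U := by simp only [mul_assoc]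
    _ = Uᵀ * (CFC.sqrt X * CFC.sqrt X) * U := by
      rw [(mem_orthogonalGroup_iff m ℝ).mp hU, mul_one]
      simp only [mul_assoc]
    _ = Uᵀ * X * U := by rw [CFC.sqrt_mul_sqrt_self X hX.nonneg]

end Sqrt

section Polar

variable {m : Type*} [Fintype m] [DecidableEq m]

lemma abs_le_one_of_mem_orthogonalGroup {U : Matrix m m ℝ} (hU : U ∈ orthogonalGroup m ℝ)
    (i j : m) : |U i j| ≤ 1 := by
  have hrow : ∑ k, U i k ^ 2 = 1 := by
    simpa [mul_apply, sq] using congr_fun₂ ((mem_orthogonalGroup_iff m ℝ).mp hU) i i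
  rw [← sq_le_one_iff_abs_le_one, ← hrow]
  exact Finset.single_le_sum (fun k _ => sq_nonneg (U i k)) (Finset.mem_univ j)

lemma isCompact_orthogonalGroup : IsCompact (orthogonalGroup m ℝ : Set (Matrix m m ℝ)) := by
  have hclosed : IsClosed (orthogonalGroup m ℝ : Set (Matrix m m ℝ)) := by
    have : (orthogonalGroup m ℝ : Set (Matrix m m ℝ)) = {U | U * Uᵀ = 1} :=
      Set.ext fun U => mem_orthogonalGroup_iff m ℝ
    rw [this]
    exact isClosed_eq (by fun_prop) continuous_const
  refine (isCompact_univ_pi fun _ => isCompact_univ_pi fun _ =>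
    isCompact_Icc (a := (-1 : ℝ)) (b := 1)).of_isClosed_subset
    hclosed fun U hU => ?_
  simp only [Set.mem_univ_pi]
  exact fun i j => abs_le.mp (abs_le_one_of_mem_orthogonalGroup hU i j)

lemma dense_setOf_isUnit {𝕜 : Type*} [NontriviallyNormedField 𝕜] :
    Dense {C : Matrix m m 𝕜 | IsUnit C} := by
  intro C
  have hroots := Polynomial.finite_setOfPred_isRoot (charpoly_monic (-C)).ne_zero
  have hunit : ∀ᶠ ε in 𝓝[≠] (0 : 𝕜), IsUnit (scalar m ε + C) := by
    filter_upwards [nhdsNE_le_cofinite (0 : 𝕜) hroots.compl_mem_cofinite] with ε hε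
    rw [isUnit_iff_isUnit_det, isUnit_iff_ne_zero, ← sub_neg_eq_add, ← eval_charpoly]
    exact hε
  have hlim : Tendsto (fun ε : 𝕜 => scalar m ε + C) (𝓝[≠] 0) (𝓝 C) := by
    have : Continuous (fun ε : 𝕜 => scalar m ε + C) := by
      simp only [scalar_apply]
      fun_prop
    simpa using (this.tendsto 0).mono_left nhdsWithin_le_nhds
  exact mem_closure_of_tendsto hlim hunit

lemma exists_mem_orthogonalGroup_posSemidef_mul_transpose_of_isUnit {C : Matrix m m ℝ}
    (hC : IsUnit C) : ∃ U ∈ orthogonalGroup m ℝ, (C * Uᵀ).PosSemidef := by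
  set P := CFC.sqrt (C * Cᵀ)
  have hPP : P * P = C * Cᵀ := CFC.sqrt_mul_sqrt_self _ (posSemidef_mul_transpose_self C).nonneg
  have hP : IsUnit P.det := by
    have : IsUnit (P.det * P.det) := by
      rw [← det_mul, hPP, det_mul, det_transpose]
      exact (isUnit_iff_isUnit_det C).mp hC |>.mul ((isUnit_iff_isUnit_det C).mp hC)
    exact isUnit_of_mul_isUnit_left this
  have hPt : P⁻¹ᵀ = P⁻¹ := by rw [transpose_nonsing_inv, (posSemidef_sqrt _).transpose_eq]
  refine ⟨P⁻¹ * C, (mem_orthogonalGroup_iff m ℝ).mpr ?_, ?_⟩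
  · rw [transpose_mul, hPt, mul_assoc, ← mul_assoc C, ← hPP, ← mul_assoc, ← mul_assoc,
      nonsing_inv_mul _ hP, one_mul, mul_nonsing_inv _ hP]
  · rw [transpose_mul, hPt, ← mul_assoc, ← hPP, mul_assoc, mul_nonsing_inv _ hP, mul_one]
    exact posSemidef_sqrt _

/-- The condition is closed because the orthogonal group is compact, and it holds on the dense set
of invertible matrices. -/
lemma exists_mem_orthogonalGroup_posSemidef_mul_transpose (C : Matrix m m ℝ) :
    ∃ U ∈ orthogonalGroup m ℝ, (C * Uᵀ).PosSemidef := by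
  have := isCompact_iff_compactSpace.mp (isCompact_orthogonalGroup (m := m))
  have hclosed : IsClosed {C : Matrix m m ℝ | ∃ U ∈ orthogonalGroup m ℝ, (C * Uᵀ).PosSemidef} := by
    have : {C : Matrix m m ℝ | ∃ U ∈ orthogonalGroup m ℝ, (C * Uᵀ).PosSemidef} = Prod.fst ''
        {p : Matrix m m ℝ × (orthogonalGroup m ℝ : Set (Matrix m m ℝ)) |
          (p.1 * (p.2 : Matrix m m ℝ)ᵀ).PosSemidef} := by
      ext C
      simp
    rw [this]
    exact isClosedMap_fst_of_compactSpace _ (isClosed_setOf_posSemidef.preimage (by fun_prop))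
  exact hclosed.closure_subset_iff.mpr
    (fun _ hC => exists_mem_orthogonalGroup_posSemidef_mul_transpose_of_isUnit hC)
    (dense_setOf_isUnit _)

theorem exists_mem_orthogonalGroup_eq_sqrt_mul (C : Matrix m m ℝ) :
    ∃ U ∈ orthogonalGroup m ℝ, C = CFC.sqrt (C * Cᵀ) * U := by
  obtain ⟨U, hU, hP⟩ := exists_mem_orthogonalGroup_posSemidef_mul_transpose C
  have hCU : C * Uᵀ * U = C := by rw [mul_assoc, (mem_orthogonalGroup_iff' m ℝ).mp hU, mul_one]
  refine ⟨U, hU, ?_⟩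
  rw [CFC.sqrt_unique (b := C * Uᵀ) ?_ hP.nonneg, hCU]
  calc C * Uᵀ * (C * Uᵀ) = C * Uᵀ * (C * Uᵀ)ᵀ := by rw [hP.transpose_eq]
    _ = C * Cᵀ := by
      rw [transpose_mul, transpose_transpose, mul_assoc, ← mul_assoc Uᵀ,
        (mem_orthogonalGroup_iff' m ℝ).mp hU, one_mul]

lemma dist_frobeniusVec_sqrt_mul_sq {U P : Matrix m m ℝ} (hU : U ∈ orthogonalGroup m ℝ)
    (hP : P.PosSemidef) :
    dist (frobeniusVec (CFC.sqrt P)) (frobeniusVec (U * CFC.sqrt P)) ^ 2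
      = 2 * (P.trace - (U * P).trace) := by
  set S := CFC.sqrt P
  have hS : S * Sᵀ = P := sqrt_mul_transpose_sqrt hP
  have hUS : (U * S * (U * S)ᵀ).trace = P.trace := by
    calc (U * S * (U * S)ᵀ).trace = (U * (S * Sᵀ) * Uᵀ).trace := by
          rw [transpose_mul]
          simp only [mul_assoc]
      _ = P.trace := by rw [trace_mul_cycle, (mem_orthogonalGroup_iff' m ℝ).mp hU, one_mul, hS]
  have hSUS : (Sᵀ * (U * S)).trace = (U * P).trace := by
    rw [(posSemidef_sqrt P).transpose_eq, trace_mul_comm, mul_assoc,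
      CFC.sqrt_mul_sqrt_self P hP.nonneg]
  rw [dist_frobeniusVec_sq, hS, hUS, hSUS]
  ring

lemma trace_mul_le_trace_of_mem_orthogonalGroup {U P : Matrix m m ℝ}
    (hU : U ∈ orthogonalGroup m ℝ) (hP : P.PosSemidef) : (U * P).trace ≤ P.trace := by
  nlinarith [dist_frobeniusVec_sqrt_mul_sq hU hP,
    sq_nonneg (dist (frobeniusVec (CFC.sqrt P)) (frobeniusVec (U * CFC.sqrt P)))]

lemma mul_eq_self_of_trace_mul_eq_trace {U P : Matrix m m ℝ} (hU : U ∈ orthogonalGroup m ℝ)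
    (hP : P.PosSemidef) (h : (U * P).trace = P.trace) : U * P = P := by
  have hdist := dist_frobeniusVec_sqrt_mul_sq hU hP
  rw [h, sub_self, mul_zero, sq_eq_zero_iff, dist_eq_zero] at hdist
  rw [← CFC.sqrt_mul_sqrt_self P hP.nonneg, ← mul_assoc, ← frobeniusVec_injective hdist]

theorem trace_le_trace_sqrt_mul_transpose (C : Matrix m m ℝ) :
    C.trace ≤ (CFC.sqrt (C * Cᵀ)).trace := by
  obtain ⟨U, hU, hC⟩ := exists_mem_orthogonalGroup_eq_sqrt_mul C
  calc C.trace = (U * CFC.sqrt (C * Cᵀ)).trace := by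
        conv_lhs => rw [hC]
        exact trace_mul_comm _ _
    _ ≤ _ := trace_mul_le_trace_of_mem_orthogonalGroup hU (posSemidef_sqrt _)

theorem trace_eq_trace_sqrt_mul_transpose_iff {C : Matrix m m ℝ} :
    C.trace = (CFC.sqrt (C * Cᵀ)).trace ↔ C.PosSemidef := by
  refine ⟨fun h => ?_, fun hC => by rw [hC.transpose_eq, CFC.sqrt_mul_self C hC.nonneg]⟩
  obtain ⟨U, hU, hC⟩ := exists_mem_orthogonalGroup_eq_sqrt_mul C
  set P := CFC.sqrt (C * Cᵀ)
  have hUP : U * P = P := mul_eq_self_of_trace_mul_eq_trace hU (posSemidef_sqrt _)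
    (by rw [trace_mul_comm, ← hC, h])
  have hPU : P * U = P := by
    calc P * U = (Uᵀ * (U * P))ᵀ := by
          rw [hUP, transpose_mul, transpose_transpose, (posSemidef_sqrt _).transpose_eq]
      _ = P := by
          rw [← mul_assoc, (mem_orthogonalGroup_iff' m ℝ).mp hU, one_mul,
            (posSemidef_sqrt _).transpose_eq]
  rw [hC, hPU]
  exact posSemidef_sqrt _

theorem exists_mul_transpose_eq_posSemidef_transpose_mul {B : Matrix m m ℝ} (hB : B.PosSemidef)
    (G : Matrix m m ℝ) : ∃ M : Matrix m m ℝ, M * Mᵀ = B ∧ (Gᵀ * M).PosSemidef := by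
  obtain ⟨V, hV, hGV⟩ := exists_mem_orthogonalGroup_posSemidef_mul_transpose (Gᵀ * CFC.sqrt B)
  refine ⟨CFC.sqrt B * Vᵀ, ?_, by rwa [← mul_assoc]⟩
  rw [transpose_mul, transpose_transpose, mul_assoc, ← mul_assoc Vᵀ,
    (mem_orthogonalGroup_iff' m ℝ).mp hV, one_mul, sqrt_mul_transpose_sqrt hB]

end Polar

section GramLineMap

variable {m n : Type*} [Fintype n]

def gramLineMap (G M : Matrix m n ℝ) (t : ℝ) : Matrix m m ℝ :=
  ((1 - t) • G + t • M) * ((1 - t) • G + t • M)ᵀ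

lemma gramLineMap_eq (G M : Matrix m n ℝ) (t : ℝ) :
    gramLineMap G M t
      = (1 - t) ^ 2 • (G * Gᵀ) + (t * (1 - t)) • (G * Mᵀ + M * Gᵀ) + t ^ 2 • (M * Mᵀ) := by
  simp only [gramLineMap, transpose_add, transpose_smul, Matrix.add_mul, Matrix.mul_add,
    Matrix.smul_mul, Matrix.mul_smul]
  module

lemma gramLineMap_eq_of_half {G M M' : Matrix m n ℝ} (hM : M * Mᵀ = M' * M'ᵀ)
    (h : gramLineMap G M (1 / 2) = gramLineMap G M' (1 / 2)) (t : ℝ) :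
    gramLineMap G M t = gramLineMap G M' t := by
  rw [gramLineMap_eq, gramLineMap_eq, hM] at h ⊢
  have hcross : G * Mᵀ + M * Gᵀ = G * M'ᵀ + M' * Gᵀ :=
    smul_right_injective (Matrix m m ℝ) (by norm_num : (1 / 2 : ℝ) * (1 - 1 / 2) ≠ 0)
      (add_left_cancel (add_right_cancel h))
  rw [hcross]

end GramLineMap

end Matrix

section BuresWasserstein

variable {n : ℕ}

lemma psdSqrt_eq_sqrt (M : Matrix (Fin n) (Fin n) ℝ) : psdSqrt M = CFC.sqrt M := by
  by_cases h : M.PosSemidef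
  · rw [psdSqrt, dif_pos h, CFC.sqrt_eq_real_sqrt M h.nonneg, cfcₙ_eq_cfc (hf0 := Real.sqrt_zero),
      h.1.cfc_eq, IsHermitian.cfc, Unitary.conjStarAlgAut_apply]
    rfl
  · rw [psdSqrt, dif_neg h, CFC.sqrt_of_not_nonneg (by rwa [nonneg_iff_posSemidef])]

lemma sqrtTr_eq_trace_sqrt {A B G M : Matrix (Fin n) (Fin n) ℝ} (hGA : G * Gᵀ = A)
    (hMB : M * Mᵀ = B) : sqrtTr A B = (CFC.sqrt (Gᵀ * M * (Gᵀ * M)ᵀ)).trace := by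
  obtain ⟨U, hU, hG⟩ := exists_mem_orthogonalGroup_eq_sqrt_mul G
  rw [hGA] at hG
  have hB : B.PosSemidef := hMB ▸ posSemidef_mul_transpose_self M
  have hconj : Gᵀ * M * (Gᵀ * M)ᵀ = Uᵀ * (CFC.sqrt A * B * CFC.sqrt A) * U := by
    rw [transpose_mul, transpose_transpose, ← hMB, hG, transpose_mul,
      (posSemidef_sqrt A).transpose_eq]
    simp only [mul_assoc]
  have hpsd : (CFC.sqrt A * B * CFC.sqrt A).PosSemidef := by
    simpa [(posSemidef_sqrt A).transpose_eq] using hB.transpose_mul_mul_same (CFC.sqrt A)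
  rw [sqrtTr, psdSqrt_eq_sqrt, psdSqrt_eq_sqrt, hconj, sqrt_transpose_mul_mul hU hpsd,
    trace_mul_cycle, (mem_orthogonalGroup_iff (Fin n) ℝ).mp hU, one_mul]

lemma W2sq_le_dist_sq {A B G M : Matrix (Fin n) (Fin n) ℝ} (hGA : G * Gᵀ = A)
    (hMB : M * Mᵀ = B) : W2sq A B ≤ dist (frobeniusVec G) (frobeniusVec M) ^ 2 := by
  rw [W2sq, dist_frobeniusVec_sq, hGA, hMB, sqrtTr_eq_trace_sqrt hGA hMB]
  linarith [trace_le_trace_sqrt_mul_transpose (Gᵀ * M)]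

lemma W2sq_eq_dist_sq_iff {A B G M : Matrix (Fin n) (Fin n) ℝ} (hGA : G * Gᵀ = A)
    (hMB : M * Mᵀ = B) :
    W2sq A B = dist (frobeniusVec G) (frobeniusVec M) ^ 2 ↔ (Gᵀ * M).PosSemidef := by
  rw [W2sq, dist_frobeniusVec_sq, hGA, hMB, sqrtTr_eq_trace_sqrt hGA hMB,
    ← trace_eq_trace_sqrt_mul_transpose_iff]
  constructor <;> intro h <;> linarith

lemma W2sq_nonneg {A B : Matrix (Fin n) (Fin n) ℝ} (hA : A.PosSemidef) (hB : B.PosSemidef) :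
    0 ≤ W2sq A B := by
  obtain ⟨M, hMB, hGM⟩ := exists_mul_transpose_eq_posSemidef_transpose_mul hB (CFC.sqrt A)
  rw [(W2sq_eq_dist_sq_iff (sqrt_mul_transpose_sqrt hA) hMB).mpr hGM]
  positivity

lemma dist_frobeniusVec_eq_mul_sqrt {A B X Y : Matrix (Fin n) (Fin n) ℝ} (hXA : X * Xᵀ = A)
    (hYB : Y * Yᵀ = B) (hXY : (Xᵀ * Y).PosSemidef) {c d : ℝ} (hc : 0 ≤ c)
    (h : W2sq A B = c ^ 2 * d) : dist (frobeniusVec X) (frobeniusVec Y) = c * √d := by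
  rw [← Real.sqrt_sq dist_nonneg, ← (W2sq_eq_dist_sq_iff hXA hYB).mpr hXY, h,
    Real.sqrt_mul (sq_nonneg c), Real.sqrt_sq hc]

lemma eq_lineMap_of_dist_le_mul {E P : Type*} [NormedAddCommGroup E] [NormedSpace ℝ E]
    [StrictConvexSpace ℝ E] [MetricSpace P] [NormedAddTorsor E P] {x y z : P} {r s : ℝ}
    (hs₀ : 0 ≤ s) (hs₁ : s ≤ 1) (hxy : dist x y ≤ s * r) (hyz : dist y z ≤ (1 - s) * r)
    (hr : r ≤ dist x z) : y = AffineMap.lineMap x z s := by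
  have hxyz := dist_triangle x y z
  have h₁ : s * r ≤ s * dist x z := mul_le_mul_of_nonneg_left hr hs₀
  have h₂ : (1 - s) * r ≤ (1 - s) * dist x z := mul_le_mul_of_nonneg_left hr (by linarith)
  exact eq_lineMap_of_dist_eq_mul_of_dist_eq_mul (by linarith) (by linarith)

theorem exists_gramLineMap_of_W2sq_eq {A B : Matrix (Fin n) (Fin n) ℝ} (hA : A.PosSemidef)
    (hB : B.PosSemidef) {Γ : ℝ → Matrix (Fin n) (Fin n) ℝ}
    (hΓ : ∀ t ∈ Set.Icc (0 : ℝ) 1, (Γ t).PosSemidef) (hΓ0 : Γ 0 = A) (hΓ1 : Γ 1 = B)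
    (hgeod : ∀ s t : ℝ, 0 ≤ s → s ≤ t → t ≤ 1 → W2sq (Γ s) (Γ t) = (t - s) ^ 2 * W2sq A B)
    {s t : ℝ} (hs : s ∈ Set.Icc (0 : ℝ) 1) (ht : t ∈ Set.Icc (0 : ℝ) 1) :
    ∃ M : Matrix (Fin n) (Fin n) ℝ, M * Mᵀ = B ∧ ((CFC.sqrt A)ᵀ * M).PosSemidef ∧
      Γ s = gramLineMap (CFC.sqrt A) M s ∧ Γ t = gramLineMap (CFC.sqrt A) M t := by
  wlog hst : s ≤ t generalizing s t
  · obtain ⟨M, hMB, hGM, hΓt, hΓs⟩ := this ht hs (le_of_not_ge hst)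
    exact ⟨M, hMB, hGM, hΓs, hΓt⟩
  set G := CFC.sqrt A
  set r := √(W2sq A B)
  have hGA : G * Gᵀ = A := sqrt_mul_transpose_sqrt hA
  obtain ⟨Ks, hKs, hGKs⟩ := exists_mul_transpose_eq_posSemidef_transpose_mul (hΓ s hs) G
  obtain ⟨Kt, hKt, hKsKt⟩ := exists_mul_transpose_eq_posSemidef_transpose_mul (hΓ t ht) Ks
  obtain ⟨M, hMB, hKtM⟩ := exists_mul_transpose_eq_posSemidef_transpose_mul hB Kt
  have hdist₁ : dist (frobeniusVec G) (frobeniusVec Ks) = (s - 0) * r :=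
    dist_frobeniusVec_eq_mul_sqrt hGA hKs hGKs (by linarith [hs.1])
      (hΓ0 ▸ hgeod 0 s le_rfl hs.1 hs.2)
  have hdist₂ : dist (frobeniusVec Ks) (frobeniusVec Kt) = (t - s) * r :=
    dist_frobeniusVec_eq_mul_sqrt hKs hKt hKsKt (by linarith) (hgeod s t hs.1 hst ht.2)
  have hdist₃ : dist (frobeniusVec Kt) (frobeniusVec M) = (1 - t) * r :=
    dist_frobeniusVec_eq_mul_sqrt hKt hMB hKtM (by linarith [ht.2])
      (hΓ1 ▸ hgeod t 1 ht.1 ht.2 le_rfl)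
  have hr : r ≤ dist (frobeniusVec G) (frobeniusVec M) := by
    rw [← Real.sqrt_sq dist_nonneg]
    exact Real.sqrt_le_sqrt (W2sq_le_dist_sq hGA hMB)
  have hGM : (Gᵀ * M).PosSemidef := by
    refine (W2sq_eq_dist_sq_iff hGA hMB).mp ?_
    have := dist_triangle4 (frobeniusVec G) (frobeniusVec Ks) (frobeniusVec Kt) (frobeniusVec M)
    rw [le_antisymm (by linarith) hr, Real.sq_sqrt (W2sq_nonneg hA hB)]
  have hKs_eq : Ks = (1 - s) • G + s • M := by
    refine frobeniusVec_injective ?_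
    rw [frobeniusVec_lineMap]
    refine eq_lineMap_of_dist_le_mul hs.1 hs.2 (by linarith) ?_ hr
    linarith [dist_triangle (frobeniusVec Ks) (frobeniusVec Kt) (frobeniusVec M)]
  have hKt_eq : Kt = (1 - t) • G + t • M := by
    refine frobeniusVec_injective ?_
    rw [frobeniusVec_lineMap]
    refine eq_lineMap_of_dist_le_mul ht.1 ht.2 ?_ (by linarith) hr
    linarith [dist_triangle (frobeniusVec G) (frobeniusVec Ks) (frobeniusVec Kt)]
  exact ⟨M, hMB, hGM, by rw [← hKs, hKs_eq]; rfl, by rw [← hKt, hKt_eq]; rfl⟩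

theorem W2sq_gramLineMap {A B G M : Matrix (Fin n) (Fin n) ℝ} (hGA : G * Gᵀ = A)
    (hMB : M * Mᵀ = B) (hGM : (Gᵀ * M).PosSemidef) {s t : ℝ} (hs : s ∈ Set.Icc (0 : ℝ) 1)
    (ht : t ∈ Set.Icc (0 : ℝ) 1) :
    W2sq (gramLineMap G M s) (gramLineMap G M t) = (t - s) ^ 2 * W2sq A B := by
  have hst := posSemidef_transpose_mul_smul_add_smul hGM (sub_nonneg.mpr hs.2) hs.1
    (sub_nonneg.mpr ht.2) ht.1
  rw [gramLineMap, gramLineMap, (W2sq_eq_dist_sq_iff rfl rfl).mpr hst,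
    (W2sq_eq_dist_sq_iff hGA hMB).mpr hGM, frobeniusVec_lineMap, frobeniusVec_lineMap,
    dist_lineMap_lineMap, Real.dist_eq, mul_pow, sq_abs]
  ring

end BuresWasserstein

theorem stmt12_general {n : ℕ} (A B : Matrix (Fin n) (Fin n) ℝ)
    (hA : A.PosSemidef) (hB : B.PosSemidef)
    (Γ : ℝ → Matrix (Fin n) (Fin n) ℝ)
    (hΓpsd : ∀ t ∈ Set.Icc (0 : ℝ) 1, (Γ t).PosSemidef)
    (hΓ0 : Γ 0 = A) (hΓ1 : Γ 1 = B) :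
    (∀ s t : ℝ, 0 ≤ s → s ≤ t → t ≤ 1 →
        W2sq (Γ s) (Γ t) = (t - s) ^ 2 * W2sq A B) ↔
      ∃ G M : Matrix (Fin n) (Fin n) ℝ, G * Gᵀ = A ∧ M * Mᵀ = B ∧
        (Gᵀ * M).PosSemidef ∧
        ∀ t ∈ Set.Icc (0 : ℝ) 1,
          Γ t = ((1 - t) • G + t • M) * ((1 - t) • G + t • M)ᵀ := by
  constructor
  · intro hgeod
    have hhalf : (1 / 2 : ℝ) ∈ Set.Icc (0 : ℝ) 1 := by norm_num
    obtain ⟨M, hMB, hGM, hΓhalf, -⟩ :=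
      exists_gramLineMap_of_W2sq_eq hA hB hΓpsd hΓ0 hΓ1 hgeod hhalf hhalf
    refine ⟨CFC.sqrt A, M, sqrt_mul_transpose_sqrt hA, hMB, hGM, fun t ht => ?_⟩
    obtain ⟨M', hM'B, -, hΓt, hΓhalf'⟩ :=
      exists_gramLineMap_of_W2sq_eq hA hB hΓpsd hΓ0 hΓ1 hgeod ht hhalf
    rw [hΓt]
    exact gramLineMap_eq_of_half (hM'B.trans hMB.symm) (hΓhalf'.symm.trans hΓhalf) t
  · rintro ⟨G, M, hGA, hMB, hGM, hΓ⟩ s t hs hst ht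
    rw [hΓ s ⟨hs, hst.trans ht⟩, hΓ t ⟨hs.trans hst, ht⟩]
    exact W2sq_gramLineMap hGA hMB hGM ⟨hs, hst.trans ht⟩ ⟨hs.trans hst, ht⟩

/-- For psd `A, B` with `rank A ≥ rank B`, a path `Γ` of psd matrices
with `Γ₀ = A`, `Γ₁ = B` is a constant-speed geodesic
(`W₂²(Γ_s, Γ_t) = (t−s)²·W₂²(A,B)` for `0 ≤ s ≤ t ≤ 1`) iff it is of the form
`Γ_t = ((1−t)·G + t·M)·((1−t)·G + t·M)ᵀ` with `G·Gᵀ = A`, `M·Mᵀ = B`, `Gᵀ·M ⪰ 0`. -/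
theorem stmt12 {n : ℕ} (A B : Matrix (Fin n) (Fin n) ℝ)
    (hA : A.PosSemidef) (hB : B.PosSemidef) (hrk : B.rank ≤ A.rank)
    (Γ : ℝ → Matrix (Fin n) (Fin n) ℝ)
    (hΓpsd : ∀ t ∈ Set.Icc (0 : ℝ) 1, (Γ t).PosSemidef)
    (hΓ0 : Γ 0 = A) (hΓ1 : Γ 1 = B) :
    (∀ s t : ℝ, 0 ≤ s → s ≤ t → t ≤ 1 →
        W2sq (Γ s) (Γ t) = (t - s) ^ 2 * W2sq A B) ↔
      ∃ G M : Matrix (Fin n) (Fin n) ℝ, G * Gᵀ = A ∧ M * Mᵀ = B ∧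
        (Gᵀ * M).PosSemidef ∧
        ∀ t ∈ Set.Icc (0 : ℝ) 1,
          Γ t = ((1 - t) • G + t • M) * ((1 - t) • G + t • M)ᵀ :=
  stmt12_general A B hA hB Γ hΓpsd hΓ0 hΓ1
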